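/- Let 𝒢 : ℝⁿ → ℝ be continuous, bounded and integrable with 𝒢(0) ≠ 0, and let g(x) = A x + b be an invertible affine map of ℝⁿ. Then the following are equivalent: (i) (𝒢 ⋆ I)(g x) = (𝒢 ⋆ (I ∘ g))(x) for every integrable I : ℝⁿ → ℝ and every x ∈ ℝⁿ; (ii) 𝒢(A v) = |det A|⁻¹ 𝒢(v) for every v ∈ ℝⁿ; (iii) the quantization kernel is invariant under the linear part, 𝒢 ∘ A = 𝒢, and the map is volume preserving, |det A| = 1. -/

import Mathlib

/-!
Substituting `z = A y + b` shows that commutation with quantization says exactly that the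
continuous functions `y ↦ |det A| 𝒢 (A (x - y))` and `y ↦ 𝒢 (x - y)` have the same pairing with
every integrable image, in particular with every smooth compactly supported one, so they agree;
at `y = 0` this is `|det A| 𝒢 (A x) = 𝒢 x`. At `v = 0` this scaling law forces `|det A| = 1`,
because `𝒢 0 ≠ 0`.
-/

open MeasureTheory
open scoped ContDiff

theorem LinearEquiv.abs_det_ne_zero {M : Type*} [AddCommGroup M] [Module ℝ M] (L : M ≃ₗ[ℝ] M) :
    |LinearMap.det (L : M →ₗ[ℝ] M)| ≠ 0 :=
  abs_ne_zero.2 L.isUnit_det'.ne_zero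

section

variable {E F : Type*} [NormedAddCommGroup E] [NormedSpace ℝ E] [FiniteDimensional ℝ E]
  [MeasurableSpace E] [BorelSpace E] [NormedAddCommGroup F] [NormedSpace ℝ F]

theorem Continuous.eq_of_integral_contDiff_mul_eq {μ : Measure E} [μ.IsOpenPosMeasure]
    [IsLocallyFiniteMeasure μ] {f g : E → ℝ} (hf : Continuous f) (hg : Continuous g)
    (h : ∀ φ : E → ℝ, ContDiff ℝ ∞ φ → HasCompactSupport φ →
      ∫ x, f x * φ x ∂μ = ∫ x, g x * φ x ∂μ) :
    f = g :=
  (hf.ae_eq_iff_eq μ hg).1 <| ae_eq_of_integral_contDiff_smul_eq hf.locallyIntegrable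
    hg.locallyIntegrable fun φ hφ hφc => by simpa only [smul_eq_mul, mul_comm] using h φ hφ hφc

variable (μ : Measure E) [μ.IsAddHaarMeasure]

theorem integral_comp_linearEquiv_add (L : E ≃ₗ[ℝ] E) (b : E) (f : E → F) :
    ∫ x, f (L x + b) ∂μ = |LinearMap.det (L : E →ₗ[ℝ] E)|⁻¹ • ∫ x, f x ∂μ := by
  let e := L.toContinuousLinearEquiv.toHomeomorph.toMeasurableEquiv
  have hmap : μ.map e = ENNReal.ofReal |LinearMap.det (L : E →ₗ[ℝ] E)|⁻¹ • μ := by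
    rw [← abs_inv]
    exact μ.map_linearMap_addHaar_eq_smul_addHaar L.isUnit_det'.ne_zero
  have := integral_map_equiv (μ := μ) e (fun x => f (x + b))
  rw [hmap, integral_smul_measure, ENNReal.toReal_ofReal (by positivity),
    integral_add_right_eq_self] at this
  exact this.symm

theorem integral_comp_sub_mul_eq (L : E ≃ₗ[ℝ] E) (b x : E) (G I : E → ℝ) :
    ∫ y, G (L x + b - y) * I y ∂μ =
      |LinearMap.det (L : E →ₗ[ℝ] E)| * ∫ y, G (L (x - y)) * I (L y + b) ∂μ := by
  have := integral_comp_linearEquiv_add μ L b fun z => G (L x + b - z) * I z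
  simp only [add_sub_add_right_eq_sub, ← map_sub, smul_eq_mul] at this
  rw [this, mul_inv_cancel_left₀ L.abs_det_ne_zero]

theorem integral_affine_comm_iff {G : E → ℝ} (hG : Continuous G) (L : E ≃ₗ[ℝ] E) (b : E) :
    (∀ I : E → ℝ, Integrable I μ → ∀ x,
        ∫ y, G (L x + b - y) * I y ∂μ = ∫ y, G (x - y) * I (L y + b) ∂μ) ↔
      ∀ v, |LinearMap.det (L : E →ₗ[ℝ] E)| * G (L v) = G v := by
  simp only [integral_comp_sub_mul_eq, ← integral_const_mul, ← mul_assoc]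
  constructor
  · intro h x
    have hL : Continuous L := L.toContinuousLinearEquiv.continuous
    let e : E ≃ₜ E := (Homeomorph.subRight b).trans L.symm.toContinuousLinearEquiv.toHomeomorph
    have hsub : (fun y => |LinearMap.det (L : E →ₗ[ℝ] E)| * G (L (x - y))) = fun y => G (x - y) := by
      refine (by fun_prop : Continuous _).eq_of_integral_contDiff_mul_eq (μ := μ)
        (by fun_prop) fun φ hφ hφc => ?_
      have hI : Integrable (φ ∘ e) μ :=
        (hφ.continuous.comp e.continuous).integrable_of_hasCompactSupport (hφc.comp_homeomorph e)
      simpa [e] using h _ hI x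
    simpa using congrFun hsub 0
  · intro h I _ x
    simp only [h]

end

theorem forall_comp_eq_mul_iff {V : Type*} [AddCommGroup V] [Module ℝ V] {G : V → ℝ}
    (h0 : G 0 ≠ 0) (A : V →ₗ[ℝ] V) (c : ℝ) :
    (∀ v, G (A v) = c * G v) ↔ (∀ v, G (A v) = G v) ∧ c = 1 := by
  constructor
  · intro h
    have hc : c = 1 := by simpa [h0] using (h 0).symm
    exact ⟨by simpa [hc] using h, hc⟩
  · rintro ⟨h, rfl⟩ v
    rw [one_mul, h]

theorem stmt_4_general (n : ℕ) (G : EuclideanSpace ℝ (Fin n) → ℝ)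
    (hcont : Continuous G) (h0 : G 0 ≠ 0)
    (A : EuclideanSpace ℝ (Fin n) →ₗ[ℝ] EuclideanSpace ℝ (Fin n))
    (hA : Function.Bijective ⇑A) (b : EuclideanSpace ℝ (Fin n)) :
    ((∀ I : EuclideanSpace ℝ (Fin n) → ℝ, Integrable I →
        ∀ x, (∫ y, G (A x + b - y) * I y) = ∫ y, G (x - y) * I (A y + b)) ↔
      ∀ v, G (A v) = |LinearMap.det A|⁻¹ * G v) ∧
    ((∀ v, G (A v) = |LinearMap.det A|⁻¹ * G v) ↔
      ((∀ v, G (A v) = G v) ∧ |LinearMap.det A| = 1)) := by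
  obtain ⟨L, rfl⟩ : ∃ L : EuclideanSpace ℝ (Fin n) ≃ₗ[ℝ] EuclideanSpace ℝ (Fin n), ↑L = A :=
    ⟨.ofBijective A hA, rfl⟩
  refine ⟨?_, by rw [forall_comp_eq_mul_iff h0, inv_eq_one]⟩
  simp only [eq_inv_mul_iff_mul_eq₀ L.abs_det_ne_zero]
  exact integral_affine_comm_iff volume hcont L b

/-- For a continuous, bounded, integrable kernel `G` with `G 0 ≠ 0` and an invertible
affine map `x ↦ A x + b`: commutation with quantization on all integrable images is
equivalent to `G (A v) = |det A|⁻¹ G v` for all `v`, which is in turn equivalent to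
`G ∘ A = G` together with `|det A| = 1`. -/
theorem stmt_4 (n : ℕ) (G : EuclideanSpace ℝ (Fin n) → ℝ)
    (hcont : Continuous G) (hbdd : ∃ C : ℝ, ∀ x, |G x| ≤ C)
    (hint : Integrable G) (h0 : G 0 ≠ 0)
    (A : EuclideanSpace ℝ (Fin n) →ₗ[ℝ] EuclideanSpace ℝ (Fin n))
    (hA : Function.Bijective ⇑A) (b : EuclideanSpace ℝ (Fin n)) :
    ((∀ I : EuclideanSpace ℝ (Fin n) → ℝ, Integrable I →
        ∀ x, (∫ y, G (A x + b - y) * I y) = ∫ y, G (x - y) * I (A y + b)) ↔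
      ∀ v, G (A v) = |LinearMap.det A|⁻¹ * G v) ∧
    ((∀ v, G (A v) = |LinearMap.det A|⁻¹ * G v) ↔
      ((∀ v, G (A v) = G v) ∧ |LinearMap.det A| = 1)) :=
  stmt_4_general n G hcont h0 A hA b
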